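/- Define R(z) = -∏_{j=0}^{2g+1} √(z - E_j), where √ is the principal branch of the complex square root with branch cut along (-∞, 0), and E_0 < ... < E_{2g+1} are real. Then R is holomorphic on ℂ \ [E_0, E_{2g+1}]. -/

import Mathlib

/-!
Every factor `z - E j` lies in the slit plane when `z` is off the real axis or to the right of
`E (2g+1)`, so there `R` is a product of holomorphic functions. To the left of `E 0` all factors
lie on or near the cut, but they share the imaginary part of `z`, so on the open half-plane
`re z < E 0` each `√(z - E j)` equals `c · √(E j - z)` with one common `c = ±i`. With an even
number of factors the sign `c ^ (2g+2) = (-1) ^ (g+1)` does not depend on `z`, and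
`-(-1) ^ (g+1) ∏ √(E j - z)` is holomorphic there.
-/

open Complex Finset
open scoped Real

namespace Complex

theorem log_eq_log_neg_add_pi_mul_I {w : ℂ} (hw : 0 < w.im ∨ w.im = 0 ∧ w.re < 0) :
    log w = log (-w) + π * I := by
  simp only [log, norm_neg, arg_neg_eq_arg_sub_pi_iff.mpr hw]
  push_cast
  ring

theorem log_eq_log_neg_sub_pi_mul_I {w : ℂ} (hw : w.im < 0) :
    log w = log (-w) - π * I := by
  simp only [log, norm_neg, arg_neg_eq_arg_add_pi_iff.mpr (Or.inl hw)]
  push_cast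
  ring

theorem cpow_eq_exp_pi_mul_I_mul_neg_cpow {w : ℂ} (hw : 0 < w.im ∨ w.im = 0 ∧ w.re < 0)
    (s : ℂ) : w ^ s = exp (π * I * s) * (-w) ^ s := by
  have hw0 : w ≠ 0 := by rintro rfl; simp at hw
  rw [cpow_def_of_ne_zero hw0, cpow_def_of_ne_zero (neg_ne_zero.mpr hw0),
    log_eq_log_neg_add_pi_mul_I hw, ← exp_add]
  ring_nf

theorem cpow_eq_exp_neg_pi_mul_I_mul_neg_cpow {w : ℂ} (hw : w.im < 0) (s : ℂ) :
    w ^ s = exp (-(π * I * s)) * (-w) ^ s := by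
  have hw0 : w ≠ 0 := by rintro rfl; simp at hw
  rw [cpow_def_of_ne_zero hw0, cpow_def_of_ne_zero (neg_ne_zero.mpr hw0),
    log_eq_log_neg_sub_pi_mul_I hw, ← exp_add]
  ring_nf

end Complex

section

variable {ι : Type*} {t : Finset ι}

theorem exists_sq_eq_neg_one_forall_sqrt_sub_eq {w : ℂ} {a : ι → ℝ}
    (ha : ∀ j ∈ t, w.re < a j) :
    ∃ c : ℂ, c ^ 2 = -1 ∧
      ∀ j ∈ t, (w - a j) ^ ((1 : ℂ) / 2) = c * ((a j : ℂ) - w) ^ ((1 : ℂ) / 2) := by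
  rcases le_or_gt 0 w.im with him | him
  · refine ⟨exp (π * I * (1 / 2)), ?_, fun j hj => ?_⟩
    · rw [← exp_nat_mul]; push_cast; ring_nf; exact exp_pi_mul_I
    · rw [cpow_eq_exp_pi_mul_I_mul_neg_cpow _, neg_sub]
      rcases him.lt_or_eq with him | him
      · exact Or.inl (by simpa using him)
      · exact Or.inr ⟨by simpa using him.symm, by simpa using ha j hj⟩
  · refine ⟨exp (-(π * I * (1 / 2))), ?_, fun j hj => ?_⟩
    · rw [← exp_nat_mul]; push_cast; ring_nf; exact exp_neg_pi_mul_I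
    · rw [cpow_eq_exp_neg_pi_mul_I_mul_neg_cpow (by simpa using him), neg_sub]

theorem prod_sqrt_sub_eq_neg_one_pow_mul {w : ℂ} {a : ι → ℝ} {n : ℕ} (ht : #t = 2 * n)
    (ha : ∀ j ∈ t, w.re < a j) :
    ∏ j ∈ t, (w - a j) ^ ((1 : ℂ) / 2) = (-1) ^ n * ∏ j ∈ t, ((a j : ℂ) - w) ^ ((1 : ℂ) / 2) := by
  obtain ⟨c, hc, hsqrt⟩ := exists_sq_eq_neg_one_forall_sqrt_sub_eq ha
  rw [prod_congr rfl hsqrt, prod_mul_distrib, prod_const, ht, pow_mul, hc]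

theorem differentiableAt_prod_cpow {f : ι → ℂ → ℂ} {z : ℂ} (s : ℂ)
    (hf : ∀ j ∈ t, DifferentiableAt ℂ (f j) z) (hz : ∀ j ∈ t, f j z ∈ slitPlane) :
    DifferentiableAt ℂ (fun w => ∏ j ∈ t, f j w ^ s) z :=
  DifferentiableAt.fun_finsetProd fun j hj => (hf j hj).cpow_const (hz j hj)

end

/-- `R(z) = -∏_{j=0}^{2g+1} √(z - E j)` (principal branch, branch cut
along `(-∞,0)`) is holomorphic on `ℂ \ [E 0, E (2g+1)]`. -/
theorem stmt_3 (g : ℕ) (E : ℕ → ℝ)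
    (hE : ∀ i j, i < j → j ≤ 2 * g + 1 → E i < E j)
    (R : ℂ → ℂ)
    (hR : ∀ z, R z = -∏ j ∈ Finset.range (2 * g + 2), (z - (E j : ℂ)) ^ ((1 : ℂ) / 2)) :
    DifferentiableOn ℂ R
      {z : ℂ | z.im ≠ 0 ∨ z.re < E 0 ∨ E (2 * g + 1) < z.re} := by
  have hbounds : ∀ j ∈ range (2 * g + 2), E 0 ≤ E j ∧ E j ≤ E (2 * g + 1) := by
    intro j hj
    have hj : j ≤ 2 * g + 1 := Nat.lt_succ_iff.mp (mem_range.mp hj)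
    exact ⟨(Nat.eq_zero_or_pos j).elim (fun h => h ▸ le_rfl) fun h => (hE 0 j h hj).le,
      hj.eq_or_lt.elim (fun h => h ▸ le_rfl) fun h => (hE j _ h le_rfl).le⟩
  have hR' : R = fun z => -∏ j ∈ range (2 * g + 2), (z - (E j : ℂ)) ^ ((1 : ℂ) / 2) := funext hR
  intro z hz
  refine DifferentiableAt.differentiableWithinAt ?_
  rcases hz with him | hleft | hright
  · rw [hR']
    exact (differentiableAt_prod_cpow _ (fun j _ => by fun_prop)
      fun j _ => mem_slitPlane_iff.mpr (Or.inr (by simpa using him))).neg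
  · have hlocal : R =ᶠ[nhds z]
        fun w => -((-1) ^ (g + 1) * ∏ j ∈ range (2 * g + 2), ((E j : ℂ) - w) ^ ((1 : ℂ) / 2)) := by
      filter_upwards [(isOpen_lt continuous_re continuous_const).mem_nhds hleft] with w hw
      rw [hR, prod_sqrt_sub_eq_neg_one_pow_mul (n := g + 1) (by simp; ring)
        fun j hj => hw.trans_le (hbounds j hj).1]
    refine DifferentiableAt.congr_of_eventuallyEq ?_ hlocal
    refine ((differentiableAt_prod_cpow _ (fun j _ => by fun_prop) fun j hj => ?_).const_mul _).neg
    exact mem_slitPlane_iff.mpr (Or.inl (by simpa using hleft.trans_le (hbounds j hj).1))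
  · rw [hR']
    exact (differentiableAt_prod_cpow _ (fun j _ => by fun_prop) fun j hj =>
      mem_slitPlane_iff.mpr (Or.inl (by simpa using (hbounds j hj).2.trans_lt hright))).neg
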